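/- Let n ≥ 2 be an integer, let a ∈ (0,1] be a real number, and let j be an integer with 0 ≤ j ≤ n/2. Then 0 < φ̂_a(j) − (1 + 𝟙(2j = n))·a^j/j! ≤ (1 + 𝟙(2j = n))·(a^j/j!)·ε_a, where 𝟙(2j = n) equals 1 if 2j = n and 0 otherwise. -/

import Mathlib

open scoped BigOperators

noncomputable def psi (n : ℕ) (a : ℝ) (j : ℕ) : ℝ :=
  ∑' k : ℕ, a ^ (j + k * n) / (Nat.factorial (j + k * n) : ℝ)

noncomputable def phiHat (n : ℕ) (a : ℝ) (j : ℤ) : ℝ :=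
  ∑ k ∈ Finset.range n, ∑ k' ∈ Finset.range n,
    if ((k' : ℤ) - (k : ℤ)) % (n : ℤ) = j % (n : ℤ) then psi n a k * psi n a k' else 0

noncomputable def phi (n : ℕ) (a : ℝ) (j : ℤ) : ℝ :=
  phiHat n a j / phiHat n a 0

noncomputable def eps (n : ℕ) (a : ℝ) : ℝ :=
  (1 + 2 * a * Real.exp a) * (1 + a ^ n * Real.exp a / (Nat.factorial n : ℝ)) ^ 2 - 1

noncomputable def zeta (n : ℕ) (a : ℝ) : ℝ :=
  ∑ j ∈ Finset.Ico 1 n, phi n a (j : ℤ)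

noncomputable def xi (n : ℕ) (a : ℝ) : ℝ :=
  sSup ((fun j : ℕ => phi n a (j : ℤ)) '' Set.Ico 1 n)

noncomputable def eta (n : ℕ) (a : ℝ) : ℝ :=
  sInf ((fun j : ℕ => phi n a ((j : ℤ) + 1) / phi n a (j : ℤ)) '' Set.Iio n)

noncomputable def alpha (n : ℕ) (b k : ℝ) : ℝ :=
  (∑ j ∈ Finset.range n,
      phi n b (j : ℤ) * (phi n k (j : ℤ)) ^ 4 *
        (phi n k ((j : ℤ) + 1) / (phi n k (j : ℤ) * phi n k 1))) /
    (∑ j ∈ Finset.range n, phi n b (j : ℤ) * (phi n k (j : ℤ)) ^ 4)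

noncomputable def rho (n : ℕ) (g : ℕ) : ℂ :=
  Complex.exp (2 * (Real.pi : ℂ) * Complex.I * (g : ℂ) / (n : ℂ))

noncomputable def etaHat (n : ℕ) (a : ℝ) : ℂ :=
  (∑ g ∈ Finset.range n, rho n g * (Real.exp (2 * a * (rho n g).re) : ℂ)) /
    (∑ g ∈ Finset.range n, (Real.exp (2 * a * (rho n g).re) : ℂ))

private lemma exp_tsum (a : ℝ) : ∑' k : ℕ, a ^ k / (Nat.factorial k : ℝ) = Real.exp a := by
  rw [Real.exp_eq_exp_ℝ, NormedSpace.exp_eq_tsum_div]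

private lemma frac_le {a : ℝ} (ha0 : 0 < a) (ha1 : a ≤ 1) {e1 e2 d1 d2 : ℕ}
    (he : e2 ≤ e1) (hd : d2 ≤ d1) (hd2 : 0 < d2) :
    a ^ e1 / (d1 : ℝ) ≤ a ^ e2 / (d2 : ℝ) :=
  div_le_div₀ (by positivity) (pow_le_pow_of_le_one ha0.le ha1 he)
    (by exact_mod_cast hd2) (by exact_mod_cast hd)

private lemma psi_summable (n : ℕ) (hn : 1 ≤ n) {a : ℝ} (ha0 : 0 < a) (ha1 : a ≤ 1) (j : ℕ) :
    Summable (fun k : ℕ => a ^ (j + k * n) / (Nat.factorial (j + k * n) : ℝ)) := by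
  apply Summable.of_nonneg_of_le (fun k => by positivity) (fun k => ?_)
    (Real.summable_pow_div_factorial a)
  have hk : k ≤ j + k * n := le_trans (Nat.le_mul_of_pos_right k hn) (Nat.le_add_left _ _)
  exact frac_le ha0 ha1 hk (Nat.factorial_le hk) (Nat.factorial_pos k)

private lemma psi_ge (n : ℕ) (hn : 1 ≤ n) {a : ℝ} (ha0 : 0 < a) (ha1 : a ≤ 1) (j : ℕ) :
    a ^ j / (Nat.factorial j : ℝ) ≤ psi n a j := by
  have h := Summable.le_tsum (psi_summable n hn ha0 ha1 j) 0 (fun k _ => by positivity)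
  simpa [psi] using h

private lemma psi_pos (n : ℕ) (hn : 1 ≤ n) {a : ℝ} (ha0 : 0 < a) (ha1 : a ≤ 1) (j : ℕ) :
    0 < psi n a j :=
  lt_of_lt_of_le (by positivity) (psi_ge n hn ha0 ha1 j)

private lemma psi_zero_ge (n : ℕ) (hn : 1 ≤ n) {a : ℝ} (ha0 : 0 < a) (ha1 : a ≤ 1) :
    1 + a ^ n / (Nat.factorial n : ℝ) ≤ psi n a 0 := by
  have h := Summable.sum_le_tsum ({0, 1} : Finset ℕ) (fun k _ => by positivity)
    (psi_summable n hn ha0 ha1 0)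
  rw [Finset.sum_pair (by norm_num)] at h
  rw [psi]
  simpa using h

private lemma psi_le (n : ℕ) (hn : 1 ≤ n) {a : ℝ} (ha0 : 0 < a) (ha1 : a ≤ 1) (j : ℕ) :
    psi n a j ≤ a ^ j / (Nat.factorial j : ℝ) *
      (1 + a ^ n * Real.exp a / (Nat.factorial n : ℝ)) := by
  have hs := psi_summable n hn ha0 ha1 j
  rw [psi, Summable.tsum_eq_zero_add hs]
  have hterm : ∀ k : ℕ, a ^ (j + (k + 1) * n) / (Nat.factorial (j + (k + 1) * n) : ℝ)
      ≤ a ^ j / (Nat.factorial j : ℝ) * (a ^ n / (Nat.factorial n : ℝ)) *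
        (a ^ k / (Nat.factorial k : ℝ)) := by
    intro k
    have heq : a ^ j / (Nat.factorial j : ℝ) * (a ^ n / (Nat.factorial n : ℝ)) *
        (a ^ k / (Nat.factorial k : ℝ))
        = a ^ (j + (n + k)) / ((Nat.factorial j * (Nat.factorial n * Nat.factorial k) : ℕ) : ℝ) := by
      push_cast
      rw [pow_add, pow_add]
      ring
    rw [heq]
    have he : j + (n + k) ≤ j + (k + 1) * n := by
      have h1 : k ≤ k * n := Nat.le_mul_of_pos_right k hn
      have h2 : (k + 1) * n = k * n + n := by ring
      omega
    have hd : Nat.factorial j * (Nat.factorial n * Nat.factorial k)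
        ≤ Nat.factorial (j + (k + 1) * n) := by
      have h1 : Nat.factorial k ≤ Nat.factorial (k * n) :=
        Nat.factorial_le (Nat.le_mul_of_pos_right k hn)
      have h2 : Nat.factorial n * Nat.factorial (k * n) ≤ Nat.factorial (n + k * n) :=
        Nat.le_of_dvd (Nat.factorial_pos _) (Nat.factorial_mul_factorial_dvd_factorial_add n (k * n))
      have h3 : Nat.factorial j * Nat.factorial (n + k * n) ≤ Nat.factorial (j + (n + k * n)) :=
        Nat.le_of_dvd (Nat.factorial_pos _) (Nat.factorial_mul_factorial_dvd_factorial_add j (n + k * n))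
      have h4 : j + (n + k * n) = j + (k + 1) * n := by ring
      calc Nat.factorial j * (Nat.factorial n * Nat.factorial k)
          ≤ Nat.factorial j * (Nat.factorial n * Nat.factorial (k * n)) :=
            Nat.mul_le_mul_left _ (Nat.mul_le_mul_left _ h1)
        _ ≤ Nat.factorial j * Nat.factorial (n + k * n) := Nat.mul_le_mul_left _ h2
        _ ≤ Nat.factorial (j + (n + k * n)) := h3
        _ = Nat.factorial (j + (k + 1) * n) := by rw [h4]
    exact frac_le ha0 ha1 he hd (by positivity)
  have htail : ∑' k : ℕ, a ^ (j + (k + 1) * n) / (Nat.factorial (j + (k + 1) * n) : ℝ)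
      ≤ a ^ j / (Nat.factorial j : ℝ) * (a ^ n / (Nat.factorial n : ℝ)) * Real.exp a := by
    have hsum2 : Summable (fun k : ℕ => a ^ j / (Nat.factorial j : ℝ) *
        (a ^ n / (Nat.factorial n : ℝ)) * (a ^ k / (Nat.factorial k : ℝ))) :=
      (Real.summable_pow_div_factorial a).mul_left _
    calc ∑' k : ℕ, a ^ (j + (k + 1) * n) / (Nat.factorial (j + (k + 1) * n) : ℝ)
        ≤ ∑' k : ℕ, a ^ j / (Nat.factorial j : ℝ) * (a ^ n / (Nat.factorial n : ℝ)) *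
            (a ^ k / (Nat.factorial k : ℝ)) :=
          Summable.tsum_le_tsum hterm ((summable_nat_add_iff 1).mpr hs) hsum2
      _ = a ^ j / (Nat.factorial j : ℝ) * (a ^ n / (Nat.factorial n : ℝ)) * Real.exp a := by
          rw [tsum_mul_left, exp_tsum]
  have h0 : a ^ (j + 0 * n) / (Nat.factorial (j + 0 * n) : ℝ) = a ^ j / (Nat.factorial j : ℝ) := by
    norm_num
  rw [h0]
  have hr : a ^ j / (Nat.factorial j : ℝ) * (1 + a ^ n * Real.exp a / (Nat.factorial n : ℝ))
      = a ^ j / (Nat.factorial j : ℝ) + a ^ j / (Nat.factorial j : ℝ) *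
        (a ^ n / (Nat.factorial n : ℝ)) * Real.exp a := by ring
  rw [hr]
  linarith [htail]

private lemma int_mod_helper (k j n : ℤ) : ((k + j) % n - k) % n = j % n := by
  have h := Int.emod_emod_of_dvd (k + j) (dvd_refl n)
  calc ((k + j) % n - k) % n = ((k + j) % n % n - k % n) % n := by rw [← Int.sub_emod]
    _ = ((k + j) % n - k % n) % n := by rw [h]
    _ = ((k + j) - k) % n := by rw [← Int.sub_emod]
    _ = j % n := by ring_nf

private lemma phiHat_eq (n : ℕ) (a : ℝ) {j : ℕ} (hj : j < n) :
    phiHat n a (j : ℤ) = ∑ k ∈ Finset.range n, psi n a k * psi n a ((k + j) % n) := by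
  unfold phiHat
  refine Finset.sum_congr rfl (fun k hk => ?_)
  have hn0 : 0 < n := by omega
  rw [Finset.sum_eq_single_of_mem ((k + j) % n) (Finset.mem_range.mpr (Nat.mod_lt _ hn0))]
  · rw [if_pos]
    rw [Int.natCast_mod]
    push_cast
    exact int_mod_helper (k : ℤ) (j : ℤ) (n : ℤ)
  · intro k' hk2 hne
    rw [if_neg]
    intro hcond
    apply hne
    have hmod : (k' : ℤ) % n = ((k + j : ℕ) : ℤ) % n := by
      calc (k' : ℤ) % n = (((k' : ℤ) - k) + k) % n := by ring_nf
        _ = (((k' : ℤ) - k) % n + (k : ℤ) % n) % n := by rw [← Int.add_emod]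
        _ = ((j : ℤ) % n + (k : ℤ) % n) % n := by rw [hcond]
        _ = ((j : ℤ) + k) % n := by rw [← Int.add_emod]
        _ = ((k + j : ℕ) : ℤ) % n := by push_cast; ring_nf
    have h2 : ((k' % n : ℕ) : ℤ) = (((k + j) % n : ℕ) : ℤ) := by
      rw [Int.natCast_mod, Int.natCast_mod]
      exact_mod_cast hmod
    have h3 : k' % n = (k + j) % n := by exact_mod_cast h2
    have h4 : k' % n = k' := Nat.mod_eq_of_lt (Finset.mem_range.mp hk2)
    omega

theorem statement5 (n : ℕ) (hn : 2 ≤ n) (a : ℝ) (ha0 : 0 < a) (ha1 : a ≤ 1)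
    (j : ℕ) (hj : 2 * j ≤ n) :
    0 < phiHat n a (j : ℤ) -
        (1 + (if 2 * j = n then (1 : ℝ) else 0)) * (a ^ j / (Nat.factorial j : ℝ)) ∧
      phiHat n a (j : ℤ) -
          (1 + (if 2 * j = n then (1 : ℝ) else 0)) * (a ^ j / (Nat.factorial j : ℝ)) ≤
        (1 + (if 2 * j = n then (1 : ℝ) else 0)) * (a ^ j / (Nat.factorial j : ℝ)) * eps n a := by
  have hn1 : 1 ≤ n := by omega
  have hn0 : 0 < n := by omega
  have hjn : j < n := by omega
  have hkey := phiHat_eq n a hjn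
  have hψpos := psi_pos n hn1 ha0 ha1
  have hψge := psi_ge n hn1 ha0 ha1
  have hψle := psi_le n hn1 ha0 ha1
  have hψ0gt : 1 < psi n a 0 := by
    have h1 := psi_zero_ge n hn1 ha0 ha1
    have h2 : (0:ℝ) < a ^ n / (Nat.factorial n : ℝ) := by positivity
    linarith
  set I : ℝ := if 2 * j = n then (1 : ℝ) else 0 with hIdef
  set Fj : ℝ := a ^ j / (Nat.factorial j : ℝ) with hFjdef
  have hFjpos : 0 < Fj := by rw [hFjdef]; positivity
  set C : ℝ := 1 + a ^ n * Real.exp a / (Nat.factorial n : ℝ) with hCdef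
  have hC1 : (1:ℝ) ≤ C := by
    rw [hCdef]
    have : (0:ℝ) ≤ a ^ n * Real.exp a / (Nat.factorial n : ℝ) := by positivity
    linarith
  have hC0 : (0:ℝ) < C := lt_of_lt_of_le one_pos hC1
  set E : ℝ := Real.exp a with hEdef
  have hE0 : (0:ℝ) < E := Real.exp_pos a
  -- lower bound
  have hlow : (1 + I) * Fj < phiHat n a (j : ℤ) := by
    rw [hkey]
    by_cases h2 : 2 * j = n
    · have hj1 : 1 ≤ j := by omega
      have h0j : (0:ℕ) ≠ j := by omega
      have hsub : ({0, j} : Finset ℕ) ⊆ Finset.range n := by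
        intro x hx
        simp only [Finset.mem_insert, Finset.mem_singleton] at hx
        rcases hx with h | h <;> simp [Finset.mem_range, h] <;> omega
      have hle : ∑ k ∈ ({0, j} : Finset ℕ), psi n a k * psi n a ((k + j) % n)
          ≤ ∑ k ∈ Finset.range n, psi n a k * psi n a ((k + j) % n) :=
        Finset.sum_le_sum_of_subset_of_nonneg hsub
          (fun i _ _ => le_of_lt (mul_pos (hψpos i) (hψpos _)))
      rw [Finset.sum_pair h0j] at hle
      have e1 : (0 + j) % n = j := by rw [Nat.zero_add]; exact Nat.mod_eq_of_lt hjn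
      have e2 : (j + j) % n = 0 := by rw [show j + j = n by omega]; exact Nat.mod_self n
      rw [e1, e2] at hle
      have t1 : Fj < psi n a 0 * psi n a j := by
        have h3 := hψge j
        nlinarith [hψpos j]
      have t2 : Fj < psi n a j * psi n a 0 := by rw [mul_comm]; exact t1
      have hI1 : I = 1 := by rw [hIdef, if_pos h2]
      rw [hI1]
      linarith
    · have hle : psi n a 0 * psi n a ((0 + j) % n)
          ≤ ∑ k ∈ Finset.range n, psi n a k * psi n a ((k + j) % n) :=
        Finset.single_le_sum (f := fun k => psi n a k * psi n a ((k + j) % n))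
          (fun i _ => le_of_lt (mul_pos (hψpos i) (hψpos _))) (Finset.mem_range.mpr hn0)
      rw [Nat.zero_add, Nat.mod_eq_of_lt hjn] at hle
      have t1 : Fj < psi n a 0 * psi n a j := by
        have h3 := hψge j
        nlinarith [hψpos j]
      have hI0 : I = 0 := by rw [hIdef, if_neg h2]
      rw [hI0]
      linarith
  -- upper bound pieces
  have hSle : ∑ k ∈ Finset.range n, psi n a k * psi n a ((k + j) % n)
      ≤ ∑ k ∈ Finset.range n, C ^ 2 *
        ((a ^ k / (Nat.factorial k : ℝ)) *
          (a ^ ((k + j) % n) / (Nat.factorial ((k + j) % n) : ℝ))) := by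
    apply Finset.sum_le_sum
    intro k _
    have h1 := hψle k
    have h2 := hψle ((k + j) % n)
    have h3 : psi n a k * psi n a ((k + j) % n)
        ≤ (a ^ k / (Nat.factorial k : ℝ) * C) *
          (a ^ ((k + j) % n) / (Nat.factorial ((k + j) % n) : ℝ) * C) := by
      apply mul_le_mul h1 h2 (le_of_lt (hψpos _))
      positivity
    calc psi n a k * psi n a ((k + j) % n)
        ≤ (a ^ k / (Nat.factorial k : ℝ) * C) *
          (a ^ ((k + j) % n) / (Nat.factorial ((k + j) % n) : ℝ) * C) := h3
      _ = C ^ 2 * ((a ^ k / (Nat.factorial k : ℝ)) *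
          (a ^ ((k + j) % n) / (Nat.factorial ((k + j) % n) : ℝ))) := by ring
  -- bound the F-sum
  set g : ℕ → ℝ := fun k => (a ^ k / (Nat.factorial k : ℝ)) *
      (a ^ ((k + j) % n) / (Nat.factorial ((k + j) % n) : ℝ)) with hgdef
  set s : Finset ℕ := if 2 * j = n then ({0, j} : Finset ℕ) else {0} with hsdef
  have hssub : s ⊆ Finset.range n := by
    rw [hsdef]
    by_cases h2 : 2 * j = n <;> simp only [if_pos, if_neg, h2, ite_true, ite_false] <;>
      intro x hx <;> simp only [Finset.mem_insert, Finset.mem_singleton] at hx <;>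
      simp only [Finset.mem_range] <;> omega
  have hs_eq : ∑ k ∈ s, g k = (1 + I) * Fj := by
    rw [hsdef, hIdef]
    by_cases h2 : 2 * j = n
    · rw [if_pos h2, if_pos h2]
      have h0j : (0:ℕ) ≠ j := by omega
      rw [Finset.sum_pair h0j, hgdef]
      simp only
      have e1 : (0 + j) % n = j := by rw [Nat.zero_add]; exact Nat.mod_eq_of_lt hjn
      have e2 : (j + j) % n = 0 := by rw [show j + j = n by omega]; exact Nat.mod_self n
      rw [e1, e2, hFjdef]
      simp [Nat.factorial_zero]
      ring
    · rw [if_neg h2, if_neg h2]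
      rw [Finset.sum_singleton, hgdef]
      simp only
      have e1 : (0 + j) % n = j := by rw [Nat.zero_add]; exact Nat.mod_eq_of_lt hjn
      rw [e1, hFjdef]
      simp [Nat.factorial_zero]
  have hexp_sum : ∀ t : Finset ℕ, ∑ m ∈ t, a ^ m / (Nat.factorial m : ℝ) ≤ E := by
    intro t
    rw [hEdef, ← exp_tsum a]
    exact Summable.sum_le_tsum t (fun i _ => by positivity) (Real.summable_pow_div_factorial a)
  have hD : ∑ k ∈ Finset.range n \ s, g k ≤ Fj * a * E + Fj * a * E := by
    rw [← Finset.sum_filter_add_sum_filter_not (Finset.range n \ s) (fun k => k + j < n)]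
    apply add_le_add
    · -- branch 1 : k + j < n
      have hb1 : ∀ k ∈ (Finset.range n \ s).filter (fun k => k + j < n),
          g k ≤ Fj * a * (a ^ k / (Nat.factorial k : ℝ)) := by
        intro k hk
        simp only [Finset.mem_filter, Finset.mem_sdiff, Finset.mem_range] at hk
        obtain ⟨⟨hkn, hks⟩, hkj⟩ := hk
        have hk0 : 1 ≤ k := by
          rcases Nat.eq_zero_or_pos k with h | h
          · exfalso; apply hks; rw [hsdef]
            by_cases h2 : 2 * j = n <;> simp [h2, h]
          · exact h
        have e1 : (k + j) % n = k + j := Nat.mod_eq_of_lt hkj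
        rw [hgdef]
        simp only
        rw [e1]
        have heq1 : a ^ k / (Nat.factorial k : ℝ) * (a ^ (k + j) / (Nat.factorial (k + j) : ℝ))
            = a ^ (k + (k + j)) / ((Nat.factorial k * Nat.factorial (k + j) : ℕ) : ℝ) := by
          push_cast; rw [pow_add]; ring
        have heq2 : Fj * a * (a ^ k / (Nat.factorial k : ℝ))
            = a ^ (j + 1 + k) / ((Nat.factorial j * Nat.factorial k : ℕ) : ℝ) := by
          rw [hFjdef]; push_cast; rw [pow_add, pow_add, pow_one]; ring
        rw [heq1, heq2]
        apply frac_le ha0 ha1 (by omega)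
        · calc Nat.factorial j * Nat.factorial k ≤ Nat.factorial (k + j) * Nat.factorial k :=
              Nat.mul_le_mul_right _ (Nat.factorial_le (by omega))
            _ = Nat.factorial k * Nat.factorial (k + j) := by ring
        · positivity
      calc ∑ k ∈ (Finset.range n \ s).filter (fun k => k + j < n), g k
          ≤ ∑ k ∈ (Finset.range n \ s).filter (fun k => k + j < n),
              Fj * a * (a ^ k / (Nat.factorial k : ℝ)) := Finset.sum_le_sum hb1
        _ = Fj * a * ∑ k ∈ (Finset.range n \ s).filter (fun k => k + j < n),
              a ^ k / (Nat.factorial k : ℝ) := by rw [← Finset.mul_sum]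
        _ ≤ Fj * a * E := by
            apply mul_le_mul_of_nonneg_left (hexp_sum _) (by positivity)
    · -- branch 2 : k + j ≥ n
      set b2 : Finset ℕ := (Finset.range n \ s).filter (fun k => ¬ k + j < n) with hb2def
      have hmem : ∀ k ∈ b2, k < n ∧ k ∉ s ∧ n ≤ k + j := by
        intro k hk
        rw [hb2def] at hk
        simp only [Finset.mem_filter, Finset.mem_sdiff, Finset.mem_range] at hk
        exact ⟨hk.1.1, hk.1.2, by omega⟩
      have hb2 : ∀ k ∈ b2, g k ≤ Fj * a * (a ^ (k + j - n) / (Nat.factorial (k + j - n) : ℝ)) := by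
        intro k hk
        obtain ⟨hkn, hks, hnk⟩ := hmem k hk
        have hjk : j + 1 ≤ k := by
          by_cases h2 : 2 * j = n
          · have : k ≠ j := by
              intro he; apply hks; rw [hsdef, if_pos h2]
              simp [he]
            omega
          · omega
        have e1 : (k + j) % n = k + j - n := by
          rw [Nat.mod_eq_sub_mod hnk]
          exact Nat.mod_eq_of_lt (by omega)
        rw [hgdef]
        simp only
        rw [e1]
        have heq1 : a ^ k / (Nat.factorial k : ℝ) *
            (a ^ (k + j - n) / (Nat.factorial (k + j - n) : ℝ))
            = a ^ (k + (k + j - n)) / ((Nat.factorial k * Nat.factorial (k + j - n) : ℕ) : ℝ) := by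
          push_cast; rw [pow_add]; ring
        have heq2 : Fj * a * (a ^ (k + j - n) / (Nat.factorial (k + j - n) : ℝ))
            = a ^ (j + 1 + (k + j - n)) /
              ((Nat.factorial j * Nat.factorial (k + j - n) : ℕ) : ℝ) := by
          rw [hFjdef]; push_cast; rw [pow_add, pow_add, pow_one]; ring
        rw [heq1, heq2]
        apply frac_le ha0 ha1 (by omega)
        · exact Nat.mul_le_mul_right _ (Nat.factorial_le (by omega))
        · positivity
      calc ∑ k ∈ b2, g k
          ≤ ∑ k ∈ b2, Fj * a * (a ^ (k + j - n) / (Nat.factorial (k + j - n) : ℝ)) :=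
            Finset.sum_le_sum hb2
        _ = Fj * a * ∑ k ∈ b2, a ^ (k + j - n) / (Nat.factorial (k + j - n) : ℝ) := by
            rw [← Finset.mul_sum]
        _ ≤ Fj * a * E := by
            apply mul_le_mul_of_nonneg_left _ (by positivity)
            have hinj : ∀ x ∈ b2, ∀ y ∈ b2, x + j - n = y + j - n → x = y := by
              intro x hx y hy hxy
              have h1 := (hmem x hx).2.2
              have h2 := (hmem y hy).2.2
              omega
            calc ∑ k ∈ b2, a ^ (k + j - n) / (Nat.factorial (k + j - n) : ℝ)
                = ∑ m ∈ b2.image (fun k => k + j - n), a ^ m / (Nat.factorial m : ℝ) := by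
                  rw [Finset.sum_image hinj]
              _ ≤ E := hexp_sum _
  have hS' : ∑ k ∈ Finset.range n, g k ≤ (1 + I) * Fj * (1 + 2 * a * E) := by
    rw [← Finset.sum_sdiff hssub, hs_eq]
    have hI01 : I = 0 ∨ I = 1 := by
      rw [hIdef]; by_cases h2 : 2 * j = n <;> simp [h2]
    have hFaE : 0 ≤ Fj * a * E := by positivity
    rcases hI01 with h | h <;> rw [h] <;> nlinarith
  have hup : phiHat n a (j : ℤ) ≤ (1 + I) * Fj * (1 + 2 * a * E) * C ^ 2 := by
    rw [hkey]
    calc ∑ k ∈ Finset.range n, psi n a k * psi n a ((k + j) % n)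
        ≤ ∑ k ∈ Finset.range n, C ^ 2 * g k := hSle
      _ = C ^ 2 * ∑ k ∈ Finset.range n, g k := by rw [Finset.mul_sum]
      _ ≤ C ^ 2 * ((1 + I) * Fj * (1 + 2 * a * E)) := by
          apply mul_le_mul_of_nonneg_left hS' (by positivity)
      _ = (1 + I) * Fj * (1 + 2 * a * E) * C ^ 2 := by ring
  constructor
  · linarith
  · have heps : eps n a = (1 + 2 * a * E) * C ^ 2 - 1 := by
      rw [eps, hEdef, hCdef]
    rw [heps]
    have hr : (1 + I) * Fj * ((1 + 2 * a * E) * C ^ 2 - 1)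
        = (1 + I) * Fj * (1 + 2 * a * E) * C ^ 2 - (1 + I) * Fj := by ring
    rw [hr]
    linarith
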